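/- For every n ≥ 1, let M_n be the (2n+1)×(2n+1) symmetric integer matrix defined as follows (indices 1,…,2n+1): M_n[1][1] = M_n[2][2] = 0 and M_n[i][i] = −2 for all i ≥ 3; M_n[1][2] = M_n[2][3] = 1; M_n[3][4] = 1 and M_n[i][i+1] = 1 for 4 ≤ i ≤ n+1 (first chain, indices 4,…,n+2); M_n[3][n+3] = 1 and M_n[i][i+1] = 1 for n+3 ≤ i ≤ 2n (second chain, indices n+3,…,2n+1); M_n is symmetric and all other entries are 0. Then |det M_n| = 2n. -/

import Mathlib

/-- Adjacency (with 1-based indices `i < j`) in the fork of `2n+1` rational curves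
forming the boundary of the compactified Danielewski surface `Dₙ`. -/
def forkAdj (n i j : ℕ) : Prop :=
  (i = 1 ∧ j = 2) ∨ (i = 2 ∧ j = 3) ∨ (i = 3 ∧ j = 4) ∨
  (4 ≤ i ∧ i ≤ n + 1 ∧ j = i + 1) ∨ (i = 3 ∧ j = n + 3) ∨
  (n + 3 ≤ i ∧ i ≤ 2 * n ∧ j = i + 1)

instance (n i j : ℕ) : Decidable (forkAdj n i j) := by
  unfold forkAdj; infer_instance

/-- The `(2n+1) × (2n+1)` symmetric intersection matrix `M_n` of the fork of
rational curves bounding the Danielewski surface `Dₙ` (1-based indices): the first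
two diagonal entries are `0`, the remaining diagonal entries are `−2`, and the
entries `1` record the intersections along the fork. -/
def forkMatrix (n : ℕ) : Matrix (Fin (2 * n + 1)) (Fin (2 * n + 1)) ℤ :=
  Matrix.of fun i j =>
    if i = j then (if (i : ℕ) + 1 ≤ 2 then 0 else -2)
    else if forkAdj n ((i : ℕ) + 1) ((j : ℕ) + 1) ∨ forkAdj n ((j : ℕ) + 1) ((i : ℕ) + 1)
      then 1 else 0

/-!
Vertex `0` of the dual graph of a matrix `M` is a leaf when row and column `0` vanish outside
indices `0, 1`; expanding along that row and then that column gives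
`det M = M₀₀ det M' - M₀₁ M₁₀ det M''`, where `M'`, `M''` delete the first one, resp. two, indices.
At `F_∞` (a leaf with self-intersection `0` attached to `C_∞`) this gives
`det M_n = -det N`, where `N` is the matrix of `F₀` with its two arms. Read arm, `F₀`, arm, this is a
single chain of `2n - 1` curves of self-intersection `-2`, and the same expansion at an end of a
chain of `k` such curves gives the recurrence `d_{k+2} = -2 d_{k+1} - d_k`, so `d_k = (-1)^k (k + 1)`.
Hence `det M_n = 2n`.
-/

open Matrix

namespace Matrix

variable {R : Type*} [CommRing R] {k : ℕ}

theorem det_eq_of_leaf_zero (M : Matrix (Fin (k + 2)) (Fin (k + 2)) R)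
    (hrow : ∀ j : Fin k, M 0 j.succ.succ = 0) (hcol : ∀ i : Fin k, M i.succ.succ 0 = 0) :
    M.det = M 0 0 * (M.submatrix Fin.succ Fin.succ).det -
      M 0 1 * M 1 0 * (M.submatrix (Fin.succ ∘ Fin.succ) (Fin.succ ∘ Fin.succ)).det := by
  have hminor : (M.submatrix Fin.succ (Fin.succAbove 1)).det =
      M 1 0 * (M.submatrix (Fin.succ ∘ Fin.succ) (Fin.succ ∘ Fin.succ)).det := by
    rw [det_succ_column_zero, Fin.sum_univ_succ]
    simp [hcol, Function.comp_def]
  rw [det_succ_row_zero, Fin.sum_univ_succ, Fin.sum_univ_succ]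
  simp [hrow, hminor, sub_eq_add_neg, mul_assoc]

end Matrix

def chainMatrix (m : ℕ) : Matrix (Fin m) (Fin m) ℤ :=
  Matrix.of fun i j => if i = j then -2 else if (i : ℕ) + 1 = j ∨ (j : ℕ) + 1 = i then 1 else 0

theorem chainMatrix_submatrix_succ (m : ℕ) :
    (chainMatrix (m + 1)).submatrix Fin.succ Fin.succ = chainMatrix m := by
  ext i j
  simp [chainMatrix]

theorem det_chainMatrix (m : ℕ) : (chainMatrix m).det = (-1) ^ m * (m + 1) := by
  induction m using Nat.twoStepInduction with
  | zero => simp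
  | one => simp [chainMatrix]
  | more m ih₀ ih₁ =>
    have hsub : (chainMatrix (m + 2)).submatrix (Fin.succ ∘ Fin.succ) (Fin.succ ∘ Fin.succ) =
        chainMatrix m := by
      rw [← submatrix_submatrix, chainMatrix_submatrix_succ, chainMatrix_submatrix_succ]
    have h00 : chainMatrix (m + 2) 0 0 = -2 := by simp [chainMatrix]
    have h01 : chainMatrix (m + 2) 0 1 = 1 := by simp [chainMatrix]
    have h10 : chainMatrix (m + 2) 1 0 = 1 := by simp [chainMatrix]
    rw [det_eq_of_leaf_zero, h00, h01, h10, chainMatrix_submatrix_succ, hsub, ih₁, ih₀]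
    · push_cast
      ring
    · intro j; simp [chainMatrix, Fin.ext_iff]
    · intro i; simp [chainMatrix, Fin.ext_iff]

theorem forkMatrix_apply (n : ℕ) (a b : Fin (2 * n + 1)) :
    forkMatrix n a b =
      if (a : ℕ) = b then (if (a : ℕ) + 1 ≤ 2 then 0 else -2)
      else if forkAdj n (a + 1) (b + 1) ∨ forkAdj n (b + 1) (a + 1) then 1 else 0 := by
  simp only [forkMatrix, of_apply, Fin.ext_iff]

theorem det_forkMatrix_succ (m : ℕ) :
    (forkMatrix (m + 1)).det =
      -((forkMatrix (m + 1)).submatrix (Fin.succ ∘ Fin.succ) (Fin.succ ∘ Fin.succ)).det := by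
  have h00 : forkMatrix (m + 1) 0 0 = 0 := by simp [forkMatrix_apply]
  have h01 : forkMatrix (m + 1) 0 1 = 1 := by simp [forkMatrix_apply, forkAdj]
  have h10 : forkMatrix (m + 1) 1 0 = 1 := by simp [forkMatrix_apply, forkAdj]
  rw [det_eq_of_leaf_zero, h00, h01, h10]
  · ring
  all_goals intro j; simp [forkMatrix_apply, forkAdj]

/-- Position `k` of the chain is the fork curve `m - k` for `k ≤ m` (the first arm read towards `F₀`)
and `k` otherwise, with `0`-based indices after deleting `F_∞` and `C_∞`. -/
def chainToFork (m : ℕ) : Equiv.Perm (Fin (2 * m + 1)) :=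
  Function.Involutive.toPerm (fun k => ⟨if (k : ℕ) ≤ m then m - k else k, by split <;> omega⟩)
    fun k => by ext; dsimp only; split_ifs <;> omega

theorem chainToFork_val (m : ℕ) (k : Fin (2 * m + 1)) :
    (chainToFork m k : ℕ) = if (k : ℕ) ≤ m then m - k else k :=
  rfl

theorem forkAdj_chainToFork_iff (m : ℕ) (k l : Fin (2 * m + 1)) :
    forkAdj (m + 1) (chainToFork m k + 3) (chainToFork m l + 3) ∨
        forkAdj (m + 1) (chainToFork m l + 3) (chainToFork m k + 3) ↔
      (k : ℕ) + 1 = l ∨ (l : ℕ) + 1 = k := by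
  have := k.isLt
  have := l.isLt
  rw [chainToFork_val, chainToFork_val]
  unfold forkAdj
  split_ifs <;> omega

theorem forkMatrix_submatrix_chainToFork (m : ℕ) :
    (forkMatrix (m + 1)).submatrix (fun k => (chainToFork m k).succ.succ)
      (fun k => (chainToFork m k).succ.succ) = chainMatrix (2 * m + 1) := by
  ext k l
  simp only [submatrix_apply, forkMatrix, chainMatrix, of_apply, Fin.succ_inj,
    Equiv.apply_eq_iff_eq, Fin.val_succ, add_assoc, Nat.reduceAdd, forkAdj_chainToFork_iff]
  split_ifs <;> omega

theorem forkMatrix_det_eq (n : ℕ) : (forkMatrix n).det = 2 * n := by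
  cases n with
  | zero => simp [det_unique, forkMatrix]
  | succ m =>
    have hcore : ((forkMatrix (m + 1)).submatrix (Fin.succ ∘ Fin.succ) (Fin.succ ∘ Fin.succ)).det =
        (chainMatrix (2 * m + 1)).det := by
      rw [← forkMatrix_submatrix_chainToFork]
      exact (det_submatrix_equiv_self (chainToFork m) _).symm
    rw [det_forkMatrix_succ, hcore, det_chainMatrix, (odd_two_mul_add_one m).neg_one_pow]
    push_cast
    ring

theorem forkMatrix_det_general (n : ℕ) :
    (forkMatrix n).det.natAbs = 2 * n := by
  rw [forkMatrix_det_eq]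
  omega

/-- The absolute value of the determinant of the fork matrix `M_n` equals `2n`. -/
theorem forkMatrix_det (n : ℕ) (hn : 1 ≤ n) :
    (forkMatrix n).det.natAbs = 2 * n :=
  forkMatrix_det_general n
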